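/- Let R be an integral domain and g ∈ R with g ≠ 0. Then the R-linear map T_g : R[X] → R[X] is injective, i.e., if T_g(p) = 0 then p = 0. (In the paper, with R the ring of holomorphic functions in s and g nonconstant, this is the vanishing ker P = H^{-1}(Di_Y^*(M)) = 0 for M = D_{X×S/S}/D_{X×S/S}·(x²∂_x + g(s)) and Y = {0}.) -/

import Mathlib

open Polynomial

/-! `T_g` is upper triangular with diagonal `g` in the monomial basis, so when `g` is not a
zero divisor it cannot kill a nonzero polynomial: its top coefficient is `g` times the
leading coefficient. -/

/-- The `R`-linear map `T_g : R[X] → R[X]`, `T_g(p) = g•p + X·p''`, describing the right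
action of the relative differential operator `P = x²∂_x + g(s)` on
`B^{(r)}_{{0}×S/S} = D_{X×S/S}/xD_{X×S/S} ≅ O_S[δ(x)]`, with `X^j` corresponding to
`δ^j(x)`. Equivalently `T_g(Σ_j a_j X^j) = Σ_j (j(j+1)·a_{j+1} + g·a_j)·X^j`. -/
noncomputable def Tg {R : Type*} [CommRing R] (g : R) : R[X] →ₗ[R] R[X] :=
  g • LinearMap.id +
    (LinearMap.mulLeft R (X : R[X])) ∘ₗ (Polynomial.derivative ∘ₗ Polynomial.derivative)

theorem coeff_Tg {R : Type*} [CommRing R] (g : R) (p : R[X]) (j : ℕ) :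
    (Tg g p).coeff j = g * p.coeff j + j * (j + 1) * p.coeff (j + 1) := by
  cases j with
  | zero => simp [Tg]
  | succ j =>
    simp only [Tg, LinearMap.add_apply, LinearMap.smul_apply, LinearMap.id_apply,
      LinearMap.comp_apply, LinearMap.mulLeft_apply, coeff_add, coeff_smul, smul_eq_mul,
      coeff_X_mul, coeff_derivative]
    push_cast
    ring

theorem coeff_Tg_natDegree {R : Type*} [CommRing R] (g : R) (p : R[X]) :
    (Tg g p).coeff p.natDegree = g * p.leadingCoeff := by
  rw [coeff_Tg, coeff_eq_zero_of_natDegree_lt p.natDegree.lt_succ_self, mul_zero, add_zero,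
    leadingCoeff]

/-- If `R` is an integral domain and `g ≠ 0`, then `T_g : R[X] → R[X]` is injective. -/
theorem Tg_injective {R : Type*} [CommRing R] [IsDomain R] (g : R) (hg : g ≠ 0) :
    Function.Injective (Tg g) := by
  refine (injective_iff_map_eq_zero _).mpr fun p hp => ?_
  have hlead : g * p.leadingCoeff = 0 := by
    rw [← coeff_Tg_natDegree, hp, coeff_zero]
  exact leadingCoeff_eq_zero.mp ((mul_eq_zero.mp hlead).resolve_left hg)
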